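/- arXiv:1610.05955 — 2 statements merged into one kernel-verified Lean document; each statement's English description precedes it below -/
import Mathlib

section
/- Let (X_n)_{n≥1} be i.i.d. real-valued random variables with E[X_1] > 0. Then P(X_1 + ⋯ + X_n > 0 for all n ≥ 1) > 0. -/
/-!
By the strong law of large numbers the partial sums `S n = ∑ i < n, X i` satisfy
`S n / n → 𝔼[X 0] > 0`, so `S n → ∞` almost surely. A sequence
tending to `∞` has a last time `k` at which it is at most `S 0`, and after that time it stays
strictly above `S k`: the partial sums of the shifted sequence `X (k + ·)` are all positive. Hence
for some `k` this shifted event has positive probability. Since the shifted sequence is again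
i.i.d. with the same law, its event has the same probability as the unshifted one.
-/

open MeasureTheory ProbabilityTheory Filter Finset

section

variable {Ω : Type*} [MeasurableSpace Ω] {P : Measure Ω}

lemma exists_forall_lt_of_tendsto_atTop {α : Type*} [LinearOrder α] [NoMaxOrder α] {s : ℕ → α}
    (hs : Tendsto s atTop atTop) : ∃ k, ∀ n, k < n → s k < s n := by
  have hfin : {n | s n ≤ s 0}.Finite := by
    simpa [← Nat.cofinite_eq_atTop] using hs.eventually_gt_atTop (s 0)
  obtain ⟨k, hk, hmax⟩ := Set.exists_max_image _ id hfin ⟨0, le_rfl⟩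
  exact ⟨k, fun n hkn => lt_of_le_of_lt hk (not_le.1 fun hn => (hmax n hn).not_gt hkn)⟩

lemma exists_forall_sum_range_shift_pos {x : ℕ → ℝ}
    (hx : Tendsto (fun n => ∑ i ∈ range n, x i) atTop atTop) :
    ∃ k, ∀ n, 0 < ∑ i ∈ range (n + 1), x (k + i) := by
  obtain ⟨k, hk⟩ := exists_forall_lt_of_tendsto_atTop hx
  refine ⟨k, fun n => ?_⟩
  have hlt := hk (k + (n + 1)) (by omega)
  rw [sum_range_add] at hlt
  linarith

lemma tendsto_sum_range_atTop_of_integral_pos {X : ℕ → Ω → ℝ} (hint : Integrable (X 0) P)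
    (hindep : Pairwise (Function.onFun (IndepFun · · P) X))
    (hident : ∀ i, IdentDistrib (X i) (X 0) P P) (hmean : 0 < P[X 0]) :
    ∀ᵐ ω ∂P, Tendsto (fun n => ∑ i ∈ range n, X i ω) atTop atTop := by
  filter_upwards [strong_law_ae_real X hint hindep hident] with ω hω
  refine (hω.pos_mul_atTop hmean tendsto_natCast_atTop_atTop).congr' ?_
  filter_upwards [eventually_ne_atTop 0] with n hn
  field_simp

lemma MeasureTheory.exists_measure_ne_zero_of_ae_exists {ι : Type*} [Countable ι] [NeZero P]
    {p : ι → Ω → Prop} (h : ∀ᵐ ω ∂P, ∃ i, p i ω) : ∃ i, P {ω | p i ω} ≠ 0 := by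
  by_contra! hzero
  have hnone : ∀ᵐ ω ∂P, ¬ ∃ i, p i ω := by
    rw [ae_iff]
    simpa only [not_not, Set.ofPred_exists] using measure_iUnion_null hzero
  obtain ⟨ω, hex, hnex⟩ := (h.and hnone).exists
  exact hnex hex

lemma ProbabilityTheory.iIndepFun.measure_precomp_mem_eq {ι 𝓧 : Type*} [MeasurableSpace 𝓧]
    {X : ι → Ω → 𝓧} (hmeas : ∀ i, Measurable (X i)) (hindep : iIndepFun X P) {i₀ : ι}
    (hident : ∀ i, P.map (X i) = P.map (X i₀)) {g : ι → ι} (hg : g.Injective)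
    {A : Set (ι → 𝓧)} (hA : MeasurableSet A) :
    P {ω | (fun i => X (g i) ω) ∈ A} = P {ω | (fun i => X i ω) ∈ A} := by
  have hlaw : P.map (fun ω i => X (g i) ω) = P.map (fun ω i => X i ω) := by
    rw [(hindep.precomp hg).map_fun_eq_infinitePi_map (fun i => hmeas (g i)),
      hindep.map_fun_eq_infinitePi_map hmeas]
    simp only [hident]
  have hlawA := congrArg (· A) hlaw
  rwa [Measure.map_apply (measurable_pi_lambda _ fun i => hmeas _) hA,
    Measure.map_apply (measurable_pi_lambda _ hmeas) hA] at hlawA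

lemma measurableSet_forall_sum_range_pos :
    MeasurableSet {x : ℕ → ℝ | ∀ n, 0 < ∑ i ∈ range (n + 1), x i} := by
  simp only [Set.ofPred_forall]
  exact MeasurableSet.iInter fun n =>
    measurableSet_lt measurable_const (Finset.measurable_sum _ fun i _ => measurable_pi_apply i)

end

/-- For an i.i.d. integrable real sequence with positive mean, with
positive probability all partial sums are strictly positive. -/
theorem statement1
    {Ω : Type*} [MeasurableSpace Ω] (P : Measure Ω) [IsProbabilityMeasure P]
    (X : ℕ → Ω → ℝ) (hmeas : ∀ n, Measurable (X n))
    (hindep : iIndepFun X P)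
    (hident : ∀ n, P.map (X n) = P.map (X 0))
    (hint : Integrable (X 0) P)
    (hmean : 0 < ∫ ω, X 0 ω ∂P) :
    0 < P {ω | ∀ n : ℕ, 0 < ∑ m ∈ Finset.range (n + 1), X m ω} := by
  set A := {x : ℕ → ℝ | ∀ n, 0 < ∑ i ∈ range (n + 1), x i}
  have hae : ∀ᵐ ω ∂P, ∃ k, (fun i => X (k + i) ω) ∈ A := by
    filter_upwards [tendsto_sum_range_atTop_of_integral_pos hint
      (fun i j hij => hindep.indepFun hij)
      (fun i => ⟨(hmeas i).aemeasurable, (hmeas 0).aemeasurable, hident i⟩) hmean]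
      with ω hω using exists_forall_sum_range_shift_pos hω
  obtain ⟨k, hk⟩ := exists_measure_ne_zero_of_ae_exists hae
  rw [hindep.measure_precomp_mem_eq hmeas hident (add_right_injective k)
    measurableSet_forall_sum_range_pos] at hk
  exact hk.bot_lt
end

section
/- In finite ballistic annihilation with velocities in {-1, 0, 1}, replacing the velocity of the leftmost particle by a smaller velocity (e.g., replacing +1 by 0, or by v ≤ v_0) while keeping all other particles fixed preserves the event that the leftmost particle survives the system of particles to its right: if the leftmost particle survives with velocity v_0, it also survives with any velocity v ≤ v_0. -/
noncomputable section

/-- Meeting time of particles `i` and `j` (starting positions `x`, constant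
velocities `v`), ignoring all other particles: the solution of
`x i + t * v i = x j + t * v j`. -/
def meetTime {ι : Type*} (x v : ι → ℝ) (i j : ι) : ℝ := (x j - x i) / (v i - v j)

/-- `M` is the annihilation matching of the ballistic annihilation dynamics for the
particles indexed by `I` (with starting positions `x` and velocities `v`): particles
move at constant speed and mutually annihilate in pairs at collisions, so that a pair
`i < j` annihilates iff `v i > v j` (they approach each other) and neither `i` nor `j`
is consumed in a chronologically earlier annihilation. -/
def IsBAMatching {ι : Type*} [LinearOrder ι] (I : Set ι) (x v : ι → ℝ)
    (M : ι → ι → Prop) : Prop :=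
  ∀ i j, M i j ↔
    i ∈ I ∧ j ∈ I ∧ i < j ∧ v j < v i ∧
      ∀ k l, M k l → meetTime x v k l < meetTime x v i j →
        k ≠ i ∧ k ≠ j ∧ l ≠ i ∧ l ≠ j

/-- Genericity of a configuration: no two distinct mutually approaching pairs meet at
the same time (in particular no triple collisions occur). -/
def BAGeneric {ι : Type*} [LinearOrder ι] (I : Set ι) (x v : ι → ℝ) : Prop :=
  ∀ i j k l, i ∈ I → j ∈ I → k ∈ I → l ∈ I → i < j → k < l →
    v j < v i → v l < v k → (i, j) ≠ (k, l) →
      meetTime x v i j ≠ meetTime x v k l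

/-- Particle `i` survives (is never annihilated) under the matching `M`. -/
def BASurvives {ι : Type*} (M : ι → ι → Prop) (i : ι) : Prop :=
  ∀ j, ¬ M i j ∧ ¬ M j i

end


/-!
Lowering the velocity of a leftmost particle that survives changes nothing else: by
induction on the meeting time, the annihilation matching after the change coincides with the
original one. Pairs avoiding the leftmost particle meet at the same times and are blocked by
the same earlier collisions. A pair formed by the leftmost particle and some `j` was blocked in
the original dynamics by an earlier collision involving `j`; lowering the velocity only delays
the meeting of the leftmost particle with `j`, so that collision still blocks it.
-/

open Function

variable {ι : Type*} {I : Set ι} {x v v' : ι → ℝ} {M M' : ι → ι → Prop} {i₀ i j a b : ι}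

theorem meetTime_congr_velocity (hi : v' i = v i) (hj : v' j = v j) :
    meetTime x v' i j = meetTime x v i j := by
  rw [meetTime, meetTime, hi, hj]

theorem meetTime_le_meetTime_of_sub_le (hx : x i ≤ x j) (hpos : 0 < v' i - v' j)
    (hle : v' i - v' j ≤ v i - v j) : meetTime x v i j ≤ meetTime x v' i j :=
  div_le_div_of_nonneg_left (sub_nonneg.mpr hx) hpos hle

theorem wellFounded_meetTime_lt [Finite ι] (x v : ι → ℝ) :
    WellFounded fun p q : ι × ι => meetTime x v p.1 p.2 < meetTime x v q.1 q.2 :=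
  Finite.wellFounded_of_trans_of_irrefl _

theorem BASurvives.ne_left (h : BASurvives M i₀) (hab : M a b) : a ≠ i₀ := by
  rintro rfl
  exact (h b).1 hab

theorem BASurvives.ne_right (h : BASurvives M i₀) (hab : M a b) : b ≠ i₀ := by
  rintro rfl
  exact (h a).2 hab

variable [LinearOrder ι]

section LowerVelocity

variable (hM : IsBAMatching I x v M) (hM' : IsBAMatching I x v' M')
  (hsurv : BASurvives M i₀) (hv' : ∀ k, k ≠ i₀ → v' k = v k)
include hM hM' hsurv hv'

theorem IsBAMatching.iff_of_ne_of_forall_meetTime_lt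
    (hIH : ∀ a b, meetTime x v' a b < meetTime x v' i j → (M' a b ↔ M a b))
    (hi : i ≠ i₀) (hj : j ≠ i₀) : M' i j ↔ M i j := by
  have hblockers : ∀ a b, (M' a b ∧ meetTime x v' a b < meetTime x v' i j) ↔
      (M a b ∧ meetTime x v a b < meetTime x v i j) := by
    intro a b
    constructor
    · rintro ⟨hab, hlt⟩
      have hab' := (hIH a b hlt).mp hab
      rw [meetTime_congr_velocity (hv' a (hsurv.ne_left hab')) (hv' b (hsurv.ne_right hab')),
        meetTime_congr_velocity (hv' i hi) (hv' j hj)] at hlt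
      exact ⟨hab', hlt⟩
    · rintro ⟨hab, hlt⟩
      rw [← meetTime_congr_velocity (hv' a (hsurv.ne_left hab)) (hv' b (hsurv.ne_right hab)),
        ← meetTime_congr_velocity (hv' i hi) (hv' j hj)] at hlt
      exact ⟨(hIH a b hlt).mpr hab, hlt⟩
  rw [hM' i j, hM i j, hv' i hi, hv' j hj]
  simp only [← and_imp, hblockers]

theorem IsBAMatching.not_left_of_forall_meetTime_lt
    (hIH : ∀ a b, meetTime x v' a b < meetTime x v' i₀ j → (M' a b ↔ M a b))
    (hx : StrictMono x) (hle : v' i₀ ≤ v i₀) : ¬ M' i₀ j := by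
  intro hM'i₀j
  obtain ⟨hi₀I, hjI, hlt, hvlt', hblock'⟩ := (hM' i₀ j).mp hM'i₀j
  have hj : j ≠ i₀ := hlt.ne'
  rw [hv' j hj] at hvlt'
  have hblocked := (hsurv j).1
  rw [hM i₀ j] at hblocked
  push Not at hblocked
  obtain ⟨a, b, hab, htab, hmeets⟩ := hblocked hi₀I hjI hlt (hvlt'.trans_le hle)
  have hdelay : meetTime x v i₀ j ≤ meetTime x v' i₀ j := by
    refine meetTime_le_meetTime_of_sub_le (hx hlt).le ?_ ?_ <;> rw [hv' j hj] <;> linarith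
  have htab' : meetTime x v' a b < meetTime x v' i₀ j := by
    rw [meetTime_congr_velocity (hv' a (hsurv.ne_left hab)) (hv' b (hsurv.ne_right hab))]
    exact htab.trans_le hdelay
  obtain ⟨hai, haj, hbi, hbj⟩ := hblock' a b ((hIH a b htab').mpr hab) htab'
  exact hbj (hmeets hai haj hbi)

end LowerVelocity

theorem IsBAMatching.iff_of_velocity_le_of_survives [Finite ι] (hx : StrictMono x)
    (hi₀ : IsBot i₀) (hM : IsBAMatching I x v M) (hM' : IsBAMatching I x v' M')
    (hsurv : BASurvives M i₀) (hv' : ∀ k, k ≠ i₀ → v' k = v k) (hle : v' i₀ ≤ v i₀) (i j : ι) : M' i j ↔ M i j := by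
  refine (wellFounded_meetTime_lt x v').induction (C := fun p => M' p.1 p.2 ↔ M p.1 p.2) (i, j)
    fun ⟨i, j⟩ hIH => ?_
  replace hIH : ∀ a b, meetTime x v' a b < meetTime x v' i j → (M' a b ↔ M a b) :=
    fun a b => hIH (a, b)
  by_cases hi : i = i₀
  · subst hi
    exact iff_of_false (hM.not_left_of_forall_meetTime_lt hM' hsurv hv' hIH hx hle)
      fun h => hsurv.ne_left h rfl
  by_cases hj : j = i₀
  · refine iff_of_false (fun h => ?_) fun h => hsurv.ne_right h hj
    exact not_lt_of_ge (hi₀ i) (hj ▸ ((hM' i j).mp h).2.2.1)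
  exact hM.iff_of_ne_of_forall_meetTime_lt hM' hsurv hv' hIH hi hj

theorem BASurvives.of_velocity_le_of_isBot [Finite ι] (hx : StrictMono x) (hi₀ : IsBot i₀)
    (hM : IsBAMatching I x v M) (hM' : IsBAMatching I x v' M') (hsurv : BASurvives M i₀)
    (hv' : ∀ k, k ≠ i₀ → v' k = v k) (hle : v' i₀ ≤ v i₀) : BASurvives M' i₀ := fun j => by
  simp only [hM.iff_of_velocity_le_of_survives hx hi₀ hM' hsurv hv' hle]
  exact hsurv j

theorem statement15_general {n : ℕ} (x v : Fin (n + 1) → ℝ) (hx : StrictMono x)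
    (w : ℝ) (hwle : w ≤ v 0)
    (M M' : Fin (n + 1) → Fin (n + 1) → Prop)
    (hM : IsBAMatching Set.univ x v M)
    (hM' : IsBAMatching Set.univ x (Function.update v 0 w) M')
    (hsurv : BASurvives M 0) :
    BASurvives M' 0 :=
  hsurv.of_velocity_le_of_isBot hx isBot_bot hM hM' (fun _ hk => update_of_ne hk w v)
    (by rwa [update_self])

/-- in finite ballistic annihilation with velocities in {-1,0,1},
lowering the velocity of the leftmost particle (keeping the others fixed) preserves the
event that the leftmost particle survives the system of particles to its right. -/
theorem statement15 {n : ℕ} (x v : Fin (n + 1) → ℝ) (hx : StrictMono x)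
    (hv : ∀ i, v i = -1 ∨ v i = 0 ∨ v i = 1)
    (w : ℝ) (hw : w = -1 ∨ w = 0 ∨ w = 1) (hwle : w ≤ v 0)
    (hgen : BAGeneric Set.univ x v)
    (hgen' : BAGeneric Set.univ x (Function.update v 0 w))
    (M M' : Fin (n + 1) → Fin (n + 1) → Prop)
    (hM : IsBAMatching Set.univ x v M)
    (hM' : IsBAMatching Set.univ x (Function.update v 0 w) M')
    (hsurv : BASurvives M 0) :
    BASurvives M' 0 :=
  statement15_general x v hx w hwle M M' hM hM' hsurv
end
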